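/- arXiv:1404.0484 — 2 statements merged into one kernel-verified Lean document; each statement's English description precedes it below -/
import Mathlib

section
/- For every n ≥ 1, the maximum degree of the Jaco graph increases by at most one when a vertex is added: Δ(J_{n+1}(1)) = Δ(J_n(1)) or Δ(J_{n+1}(1)) = Δ(J_n(1)) + 1. -/
/-- The Jaco out-degree function `f`: `f 0 = 0` and, for `n ≥ 1`,
`f n = n - #{k : 1 ≤ k < n ∧ k + f k ≥ n}` (the out-degree of `v_n` in `J_∞(1)`). -/
def jacoF : ℕ → ℕ
  | 0 => 0
  | n + 1 =>
    (n + 1) - ((Finset.range (n + 1)).attach.filter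
      (fun a => 1 ≤ a.1 ∧ n + 1 ≤ a.1 + jacoF a.1)).card
  decreasing_by all_goals exact Finset.mem_range.mp a.2

/-- The in-degree `d⁻(j) = #{i : 1 ≤ i < j ∧ j ≤ i + f i}` of `v_j` in `J_∞(1)`. -/
def jacoDin (j : ℕ) : ℕ := ((Finset.Ico 1 j).filter (fun i => j ≤ i + jacoF i)).card

/-- The degree `d_n(j) = d⁻(j) + #{k : j < k ≤ n ∧ k ≤ j + f j}` of `v_j` in the
underlying undirected graph of the finite Jaco graph `J_n(1)`. -/
def jacoDeg (n j : ℕ) : ℕ :=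
  jacoDin j + ((Finset.Ioc j n).filter (fun k => k ≤ j + jacoF j)).card

/-- The maximum degree `Δ(J_n(1)) = max_{1 ≤ j ≤ n} d_n(j)`. -/
def jacoDelta (n : ℕ) : ℕ := (Finset.Icc 1 n).sup (jacoDeg n)

/-- The Jaconian set `𝕁(J_n(1)) = {j : 1 ≤ j ≤ n ∧ d_n(j) = Δ(J_n(1))}`. -/
def jacoJ (n : ℕ) : Finset ℕ := (Finset.Icc 1 n).filter (fun j => jacoDeg n j = jacoDelta n)

/-! Adding `v_{n+1}` raises the degree of each old vertex by at most one, and the new vertex has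
degree `d⁻(n+1)`. If `i` is the largest in-neighbour of `v_{n+1}`, every other in-neighbour `k < i`
satisfies `i < n + 1 ≤ k + f k`, so it is an in-neighbour of `v_i` as well; hence
`d⁻(n+1) ≤ d⁻(i) + 1 ≤ Δ(J_n(1)) + 1`. -/

open Finset

lemma jacoDeg_le_jacoDeg_succ (n j : ℕ) : jacoDeg n j ≤ jacoDeg (n + 1) j :=
  Nat.add_le_add_left (card_le_card (filter_subset_filter _ (Ioc_subset_Ioc_right n.le_succ))) _

lemma jacoDeg_succ_le (n j : ℕ) : jacoDeg (n + 1) j ≤ jacoDeg n j + 1 := by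
  have hsub : (Ioc j (n + 1)).filter (fun k => k ≤ j + jacoF j) ⊆
      insert (n + 1) ((Ioc j n).filter (fun k => k ≤ j + jacoF j)) := by
    intro k hk
    simp only [mem_filter, mem_Ioc, mem_insert] at hk ⊢
    omega
  have := (card_le_card hsub).trans (card_insert_le _ _)
  unfold jacoDeg
  omega

lemma jacoDeg_self (j : ℕ) : jacoDeg j j = jacoDin j := by
  simp [jacoDeg]

lemma jacoDeg_le_jacoDelta {n j : ℕ} (hj : j ∈ Icc 1 n) : jacoDeg n j ≤ jacoDelta n :=
  le_sup hj

lemma jacoDelta_le_jacoDelta_succ (n : ℕ) : jacoDelta n ≤ jacoDelta (n + 1) :=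
  Finset.sup_le fun j hj => (jacoDeg_le_jacoDeg_succ n j).trans
    (jacoDeg_le_jacoDelta (Icc_subset_Icc_right n.le_succ hj))

lemma exists_jacoDin_le_jacoDin_add_one {m : ℕ} (hm : 0 < jacoDin m) :
    ∃ i ∈ Ico 1 m, jacoDin m ≤ jacoDin i + 1 := by
  set S := (Ico 1 m).filter (fun k => m ≤ k + jacoF k)
  obtain ⟨i, hiS, hmax⟩ : ∃ i ∈ S, ∀ k ∈ S, k ≤ i :=
    ⟨S.max' (card_pos.mp hm), S.max'_mem _, S.le_max'⟩
  refine ⟨i, (mem_filter.mp hiS).1, ?_⟩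
  have hsub : S.erase i ⊆ (Ico 1 i).filter (fun k => i ≤ k + jacoF k) := by
    intro k hk
    have hki := hmax k (mem_of_mem_erase hk)
    have hkS := mem_of_mem_erase hk
    have hiS' := hiS
    simp only [S, mem_filter, mem_Ico] at hkS hiS' ⊢
    have := ne_of_mem_erase hk
    omega
  have := card_le_card hsub
  rw [card_erase_of_mem hiS] at this
  change S.card ≤ jacoDin i + 1
  unfold jacoDin
  omega

lemma jacoDin_succ_le (n : ℕ) : jacoDin (n + 1) ≤ jacoDelta n + 1 := by
  rcases (jacoDin (n + 1)).eq_zero_or_pos with h | h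
  · omega
  obtain ⟨i, hi, hle⟩ := exists_jacoDin_le_jacoDin_add_one h
  have hi' : i ∈ Icc 1 n := by simp only [mem_Ico, mem_Icc] at hi ⊢; omega
  have : jacoDin i ≤ jacoDelta n := (Nat.le_add_right _ _).trans (jacoDeg_le_jacoDelta hi')
  omega

lemma jacoDelta_succ_le (n : ℕ) : jacoDelta (n + 1) ≤ jacoDelta n + 1 := by
  refine Finset.sup_le fun j hj => ?_
  rcases (mem_Icc.mp hj).2.lt_or_eq with hlt | rfl
  · exact (jacoDeg_succ_le n j).trans
      (Nat.add_le_add_right (jacoDeg_le_jacoDelta (mem_Icc.mpr ⟨(mem_Icc.mp hj).1, by omega⟩)) 1)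
  · exact (jacoDeg_self _).trans_le (jacoDin_succ_le n)

theorem stmt_2_general (n : ℕ) :
    jacoDelta (n + 1) = jacoDelta n ∨ jacoDelta (n + 1) = jacoDelta n + 1 := by
  have := jacoDelta_le_jacoDelta_succ n
  have := jacoDelta_succ_le n
  omega

/-- The maximum degree of the Jaco graph increases by at most one when a vertex is added. -/
theorem stmt_2 (n : ℕ) (hn : 1 ≤ n) :
    jacoDelta (n + 1) = jacoDelta n ∨ jacoDelta (n + 1) = jacoDelta n + 1 :=
  stmt_2_general n
end

section
/- For every n ≥ 4 (so that fib(n) ≥ 3): Δ(J_{fib(n)}(1)) = fib(n−1), and the Jaconian set of J_{fib(n)}(1) is the singleton {fib(n−1)}, i.e. 𝕁(J_{fib(n)}(1)) = {fib(n−1)}. -/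
/-!
Write `reach a = a + f a` for the last out-neighbour of `v_a`. Counting the `k < j` with
`reach k < j` shows that `f` is monotone, so `reach` is strictly increasing, and then that `f j`
is the least `a` with `j ≤ reach a`; in particular `f (reach a) = a` and `f (reach a + 1) = a + 1`.
Since `reach (fib (m+2)) = fib (m+2) + fib (m+1) = fib (m+3)`, induction gives
`f (fib (m+2)) = fib (m+1)`. In `J_N(1)` with `N = fib n` and `M = fib (n-1)` the degree of `v_j`
is `(j - f j) + min (f j) (N - j)`: it is at most `j < M` for `j < M`, at most
`N - f (M+1) = M - 1` for `j > M`, and exactly `M` for `j = M`.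
-/

open Finset

theorem Finset.sup_eq_of_forall_ne_lt {ι α : Type*} [LinearOrder α] [OrderBot α]
    {s : Finset ι} {d : ι → α} {x : ι} (hx : x ∈ s) (h : ∀ y ∈ s, y ≠ x → d y < d x) :
    s.sup d = d x := by
  refine le_antisymm (Finset.sup_le fun y hy => ?_) (le_sup hx)
  obtain rfl | hne := eq_or_ne y x
  exacts [le_rfl, (h y hy hne).le]

theorem Finset.filter_eq_sup_eq_singleton {ι α : Type*} [DecidableEq ι] [LinearOrder α]
    [OrderBot α] {s : Finset ι} {d : ι → α} {x : ι} (hx : x ∈ s)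
    (h : ∀ y ∈ s, y ≠ x → d y < d x) : {y ∈ s | d y = s.sup d} = {x} := by
  ext y
  rw [mem_filter, mem_singleton, sup_eq_of_forall_ne_lt hx h]
  constructor
  · rintro ⟨hy, hdy⟩
    by_contra hne
    exact (h y hy hne).ne hdy
  · rintro rfl
    exact ⟨hx, rfl⟩

def jacoReach (a : ℕ) : ℕ := a + jacoF a

theorem jacoF_eq_sub_jacoDin (j : ℕ) : jacoF j = j - jacoDin j := by
  cases j with
  | zero => rw [jacoF, Nat.zero_sub]
  | succ n =>
    rw [jacoF, filter_attach (fun a => 1 ≤ a ∧ n + 1 ≤ a + jacoF a), card_map, card_attach,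
      jacoDin]
    congr 2
    ext a
    simp only [mem_filter, mem_range, mem_Ico]
    omega

theorem jacoF_le_self (j : ℕ) : jacoF j ≤ j := by
  rw [jacoF_eq_sub_jacoDin]
  exact Nat.sub_le _ _

theorem jacoDin_add_jacoF {j : ℕ} (hj : 1 ≤ j) : jacoDin j + jacoF j = j := by
  have : jacoDin j ≤ j - 1 := (card_filter_le _ _).trans (by simp)
  rw [jacoF_eq_sub_jacoDin]
  omega

theorem jacoF_eq_one_add_card {j : ℕ} (hj : 1 ≤ j) :
    jacoF j = 1 + #{k ∈ Ico 1 j | jacoReach k < j} := by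
  have hsplit := card_filter_add_card_filter_not (s := Ico 1 j) (fun k => jacoReach k < j)
  have hcompl : #{k ∈ Ico 1 j | ¬jacoReach k < j} = jacoDin j := by
    simp only [jacoDin, jacoReach, not_lt]
  rw [hcompl, Nat.card_Ico] at hsplit
  have := jacoDin_add_jacoF hj
  omega

theorem jacoF_mono : Monotone jacoF := by
  intro i j hij
  rcases Nat.eq_zero_or_pos i with rfl | hi
  · simp [jacoF]
  rw [jacoF_eq_one_add_card hi, jacoF_eq_one_add_card (hi.trans_le hij)]
  gcongr 1 + ?_
  refine card_le_card fun k => ?_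
  simp only [mem_filter, mem_Ico]
  omega

theorem jacoReach_strictMono : StrictMono jacoReach :=
  fun _ _ hab => Nat.add_lt_add_of_lt_of_le hab (jacoF_mono hab.le)

theorem jacoF_eq_of_mem_Ioc {a j : ℕ} (hj : j ∈ Ioc (jacoReach a) (jacoReach (a + 1))) :
    jacoF j = a + 1 := by
  rw [mem_Ioc] at hj
  have ha : a < j := (Nat.le_add_right a _).trans_lt hj.1
  have hcount : {k ∈ Ico 1 j | jacoReach k < j} = Icc 1 a := by
    ext k
    simp only [mem_filter, mem_Ico, mem_Icc]
    constructor
    · rintro ⟨⟨hk, -⟩, hkj⟩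
      refine ⟨hk, Nat.le_of_lt_succ ?_⟩
      exact jacoReach_strictMono.lt_iff_lt.mp (hkj.trans_le hj.2)
    · rintro ⟨hk, hka⟩
      exact ⟨⟨hk, by omega⟩, (jacoReach_strictMono.monotone hka).trans_lt hj.1⟩
  rw [jacoF_eq_one_add_card (by omega), hcount, Nat.card_Icc]
  omega

theorem jacoF_jacoReach (a : ℕ) : jacoF (jacoReach a) = a := by
  cases a with
  | zero => simp [jacoReach, jacoF]
  | succ b =>
    exact jacoF_eq_of_mem_Ioc (mem_Ioc.mpr ⟨jacoReach_strictMono b.lt_succ_self, le_rfl⟩)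

theorem jacoF_jacoReach_add_one (a : ℕ) : jacoF (jacoReach a + 1) = a + 1 :=
  jacoF_eq_of_mem_Ioc
    (mem_Ioc.mpr ⟨Nat.lt_succ_self _, jacoReach_strictMono a.lt_succ_self⟩)

theorem jacoF_fib (m : ℕ) : jacoF (Nat.fib (m + 2)) = Nat.fib (m + 1) := by
  induction m with
  | zero => simpa [jacoReach, jacoF] using jacoF_jacoReach_add_one 0
  | succ m ih =>
    calc jacoF (Nat.fib (m + 3))
      _ = jacoF (jacoReach (Nat.fib (m + 2))) := by
        rw [jacoReach, ih, Nat.fib_add_two (n := m + 1), add_comm]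
      _ = Nat.fib (m + 2) := jacoF_jacoReach _

theorem jacoReach_fib (m : ℕ) : jacoReach (Nat.fib (m + 2)) = Nat.fib (m + 3) := by
  rw [jacoReach, jacoF_fib, Nat.fib_add_two (n := m + 1), add_comm]

theorem jacoF_fib_add_one (m : ℕ) : jacoF (Nat.fib (m + 3) + 1) = Nat.fib (m + 2) + 1 := by
  rw [← jacoReach_fib, jacoF_jacoReach_add_one]

theorem jacoDeg_eq (n : ℕ) {j : ℕ} (hj : 1 ≤ j) :
    jacoDeg n j = (j - jacoF j) + min (jacoF j) (n - j) := by
  have hout : {k ∈ Ioc j n | k ≤ j + jacoF j} = Ioc j (min n (j + jacoF j)) := by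
    ext k
    simp only [mem_filter, mem_Ioc, le_min_iff]
    omega
  rw [jacoDeg, hout, Nat.card_Ioc]
  have := jacoDin_add_jacoF hj
  omega

theorem jacoDeg_fib_self (p : ℕ) :
    jacoDeg (Nat.fib (p + 4)) (Nat.fib (p + 3)) = Nat.fib (p + 3) := by
  have hN : Nat.fib (p + 4) = Nat.fib (p + 2) + Nat.fib (p + 3) := Nat.fib_add_two
  have hC : jacoF (Nat.fib (p + 3)) = Nat.fib (p + 2) := jacoF_fib (p + 1)
  have hCM : Nat.fib (p + 2) ≤ Nat.fib (p + 3) := Nat.fib_mono (by omega)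
  rw [jacoDeg_eq _ (Nat.fib_pos.mpr (by omega)), hC]
  omega

theorem jacoDeg_fib_lt (p : ℕ) {j : ℕ} (hj : j ∈ Icc 1 (Nat.fib (p + 4)))
    (hjM : j ≠ Nat.fib (p + 3)) : jacoDeg (Nat.fib (p + 4)) j < Nat.fib (p + 3) := by
  rw [mem_Icc] at hj
  have hN : Nat.fib (p + 4) = Nat.fib (p + 2) + Nat.fib (p + 3) := Nat.fib_add_two
  have hfj := jacoF_le_self j
  rw [jacoDeg_eq _ hj.1]
  rcases hjM.lt_or_gt with hlt | hgt
  · omega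
  · have hmono := jacoF_mono (Nat.succ_le_of_lt hgt)
    rw [jacoF_fib_add_one] at hmono
    omega

/-- For `n ≥ 4`: `Δ(J_{fib n}(1)) = fib (n-1)` and `𝕁(J_{fib n}(1)) = {fib (n-1)}`. -/
theorem stmt_18 (n : ℕ) (hn : 4 ≤ n) :
    jacoDelta (Nat.fib n) = Nat.fib (n - 1) ∧
      jacoJ (Nat.fib n) = {Nat.fib (n - 1)} := by
  obtain ⟨p, rfl⟩ : ∃ p, n = p + 4 := ⟨n - 4, by omega⟩
  have hM : Nat.fib (p + 3) ∈ Icc 1 (Nat.fib (p + 4)) :=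
    mem_Icc.mpr ⟨Nat.fib_pos.mpr (by omega), Nat.fib_mono (by omega)⟩
  have hlt : ∀ j ∈ Icc 1 (Nat.fib (p + 4)), j ≠ Nat.fib (p + 3) →
      jacoDeg (Nat.fib (p + 4)) j < jacoDeg (Nat.fib (p + 4)) (Nat.fib (p + 3)) := by
    intro j hj hjM
    rw [jacoDeg_fib_self]
    exact jacoDeg_fib_lt p hj hjM
  refine ⟨?_, Finset.filter_eq_sup_eq_singleton hM hlt⟩
  rw [jacoDelta, Finset.sup_eq_of_forall_ne_lt hM hlt, jacoDeg_fib_self]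
  rfl
end
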